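/- Consider random variables X (on a finite set 𝒳), U (on finite 𝒰), X' (on 𝒳), and R (on finite ℛ) defined on a common probability space, where 𝒳 = S × 𝒰pre for finite sets S, 𝒰pre. Suppose Pr(X' = x' | X = x, U = u) = π_pre(x'.s, x'.u_pre) · ∑_{a ∈ A} P(x.s, a, x'.s) π_post(x, u, a) holds, where conditioned on (X = x, U = u) the action A is distributed as π_post(x, u, ·), the next state component X'.s given A = a is distributed as P(x.s, a, ·), independent of (x.u_pre, u) given a, and X'.u_pre given X'.s = s' is distributed as π_pre(s', ·), independent of everything else given s'. Then Pr(X'.u_pre = u'_pre | X'.s = s') = Pr(X'.u_pre = u'_pre | X'.s = s', X = x, U = u), i.e., the new pre-output is conditionally independent of the previous local state and output given the new environment state. -/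

import Mathlib

/-! By the kernel hypothesis, `Pr(X'.2 = u', X'.1 = s', X = y, U = v)` factors as
`πpre s' u'` times a quantity depending only on `(y, v)`. Since `πpre s'` sums to one, this
forces `Pr(X'.2 = u' | G) = πpre s' u'` for every event `G` on which that factorization holds,
both for `G = {X'.1 = s', X = x, U = u}` and, after summing over `(y, v)`, for `G = {X'.1 = s'}`. -/

open scoped Classical in
/-- Probability of an event under a finite probability mass function. -/
noncomputable def Pr {Ω : Type*} [Fintype Ω] (p : Ω → ℝ) (E : Ω → Prop) : ℝ :=
  ∑ ω, if E ω then p ω else 0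

/-- Conditional probability `Pr(E | F)` under a finite pmf. -/
noncomputable def CondPr {Ω : Type*} [Fintype Ω] (p : Ω → ℝ) (E F : Ω → Prop) : ℝ :=
  Pr p (fun ω => E ω ∧ F ω) / Pr p F

section Pr

variable {Ω : Type*} [Fintype Ω] {p : Ω → ℝ}

lemma Pr_congr {E F : Ω → Prop} (h : ∀ ω, E ω ↔ F ω) : Pr p E = Pr p F := by
  rw [funext fun ω => propext (h ω)]

lemma Pr_nonneg (hp : ∀ ω, 0 ≤ p ω) (E : Ω → Prop) : 0 ≤ Pr p E :=
  Finset.sum_nonneg fun ω _ => by split_ifs <;> simp [hp ω]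

lemma Pr_mono (hp : ∀ ω, 0 ≤ p ω) {E F : Ω → Prop} (h : ∀ ω, E ω → F ω) :
    Pr p E ≤ Pr p F :=
  Finset.sum_le_sum fun ω _ => by
    by_cases hE : E ω
    · simp [hE, h ω hE]
    · by_cases hF : F ω <;> simp [hE, hF, hp ω]

open scoped Classical in
lemma Pr_eq_sum_fiber {V : Type*} [Fintype V] (f : Ω → V) (E : Ω → Prop) :
    Pr p E = ∑ v, Pr p (fun ω => E ω ∧ f ω = v) := by
  unfold Pr
  rw [Finset.sum_comm]
  refine Finset.sum_congr rfl fun ω _ => ?_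
  by_cases hE : E ω <;> simp [hE]

lemma Pr_and_eq_mul_of_condPr (hp : ∀ ω, 0 ≤ p ω) {E F : Ω → Prop} {c : ℝ}
    (h : 0 < Pr p F → CondPr p E F = c) : Pr p (fun ω => E ω ∧ F ω) = c * Pr p F := by
  rcases (Pr_nonneg hp F).lt_or_eq with hF | hF
  · rw [← h hF, CondPr, div_mul_cancel₀ _ hF.ne']
  · have hEF : Pr p (fun ω => E ω ∧ F ω) ≤ Pr p F := Pr_mono hp fun ω h => h.2
    rw [← hF, mul_zero]
    exact le_antisymm (hF ▸ hEF) (Pr_nonneg hp _)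

lemma condPr_eq_of_Pr_eq_mul {V : Type*} [Fintype V] (W : Ω → V) {F : Ω → Prop}
    {f : V → ℝ} {c : ℝ} (hf : ∑ v, f v = 1)
    (h : ∀ v, Pr p (fun ω => W ω = v ∧ F ω) = f v * c) (hF : Pr p F ≠ 0) (v : V) :
    CondPr p (fun ω => W ω = v) F = f v := by
  have hc : Pr p F = c := by
    rw [Pr_eq_sum_fiber W F]
    calc ∑ v, Pr p (fun ω => F ω ∧ W ω = v)
        = ∑ v, f v * c := Finset.sum_congr rfl fun v _ => by
          rw [← h v]; exact Pr_congr fun ω => and_comm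
      _ = c := by rw [← Finset.sum_mul, hf, one_mul]
  rw [CondPr, h v, hc]
  field_simp [hc ▸ hF]

end Pr

theorem stmt_3_general {Ω S A Upre U : Type*} [Fintype Ω] [Fintype S] [Fintype A]
    [Fintype Upre] [Fintype U]
    (p : Ω → ℝ) (hp : ∀ ω, 0 ≤ p ω)
    (X : Ω → S × Upre) (Uv : Ω → U) (X' : Ω → S × Upre)
    (πpre : S → Upre → ℝ)
    (hpre1 : ∀ s, ∑ u, πpre s u = 1)
    (P : S → A → S → ℝ)
    (πpost : (S × Upre) → U → A → ℝ)
    (hker : ∀ (x : S × Upre) (u : U) (x' : S × Upre),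
      0 < Pr p (fun ω => X ω = x ∧ Uv ω = u) →
      CondPr p (fun ω => X' ω = x') (fun ω => X ω = x ∧ Uv ω = u)
        = πpre x'.1 x'.2 * ∑ a, P x.1 a x'.1 * πpost x u a) :
    ∀ (s' : S) (u' : Upre) (x : S × Upre) (u : U),
      0 < Pr p (fun ω => (X' ω).1 = s') →
      0 < Pr p (fun ω => (X' ω).1 = s' ∧ X ω = x ∧ Uv ω = u) →
      CondPr p (fun ω => (X' ω).2 = u') (fun ω => (X' ω).1 = s')
        = CondPr p (fun ω => (X' ω).2 = u')
            (fun ω => (X' ω).1 = s' ∧ X ω = x ∧ Uv ω = u) := by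
  intro s' u' x u hs' hjoint
  set g : S × Upre → U → ℝ := fun y v =>
    (∑ a, P y.1 a s' * πpost y v a) * Pr p (fun ω => X ω = y ∧ Uv ω = v)
  have hfactor : ∀ u'' y v,
      Pr p (fun ω => (X' ω).2 = u'' ∧ (X' ω).1 = s' ∧ X ω = y ∧ Uv ω = v)
        = πpre s' u'' * g y v := fun u'' y v => by
    calc _ = Pr p (fun ω => X' ω = (s', u'') ∧ X ω = y ∧ Uv ω = v) :=
          Pr_congr fun ω => by simp only [Prod.ext_iff]; tauto
      _ = πpre s' u'' * g y v := by
          rw [Pr_and_eq_mul_of_condPr hp (hker y v (s', u'')), mul_assoc]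
  have hmarg : ∀ u'', Pr p (fun ω => (X' ω).2 = u'' ∧ (X' ω).1 = s')
      = πpre s' u'' * ∑ y, ∑ v, g y v := fun u'' => by
    rw [Pr_eq_sum_fiber X, Finset.mul_sum]
    refine Finset.sum_congr rfl fun y _ => ?_
    rw [Pr_eq_sum_fiber Uv, Finset.mul_sum]
    refine Finset.sum_congr rfl fun v _ => ?_
    rw [← hfactor]
    exact Pr_congr fun ω => by simp only [and_assoc]
  rw [condPr_eq_of_Pr_eq_mul _ (hpre1 s') hmarg hs'.ne',
    condPr_eq_of_Pr_eq_mul _ (hpre1 s') (fun u'' => hfactor u'' x u) hjoint.ne']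

theorem stmt_3 {Ω S A Upre U : Type*} [Fintype Ω] [Fintype S] [Fintype A]
    [Fintype Upre] [Fintype U]
    (p : Ω → ℝ) (hp : ∀ ω, 0 ≤ p ω) (hpsum : ∑ ω, p ω = 1)
    (X : Ω → S × Upre) (Uv : Ω → U) (X' : Ω → S × Upre)
    (πpre : S → Upre → ℝ) (hpre0 : ∀ s u, 0 ≤ πpre s u)
    (hpre1 : ∀ s, ∑ u, πpre s u = 1)
    (P : S → A → S → ℝ) (hP0 : ∀ s a s', 0 ≤ P s a s')
    (hP1 : ∀ s a, ∑ s', P s a s' = 1)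
    (πpost : (S × Upre) → U → A → ℝ) (hpost0 : ∀ x u a, 0 ≤ πpost x u a)
    (hpost1 : ∀ x u, ∑ a, πpost x u a = 1)
    (hker : ∀ (x : S × Upre) (u : U) (x' : S × Upre),
      0 < Pr p (fun ω => X ω = x ∧ Uv ω = u) →
      CondPr p (fun ω => X' ω = x') (fun ω => X ω = x ∧ Uv ω = u)
        = πpre x'.1 x'.2 * ∑ a, P x.1 a x'.1 * πpost x u a) :
    ∀ (s' : S) (u' : Upre) (x : S × Upre) (u : U),
      0 < Pr p (fun ω => (X' ω).1 = s') →
      0 < Pr p (fun ω => (X' ω).1 = s' ∧ X ω = x ∧ Uv ω = u) →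
      CondPr p (fun ω => (X' ω).2 = u') (fun ω => (X' ω).1 = s')
        = CondPr p (fun ω => (X' ω).2 = u')
            (fun ω => (X' ω).1 = s' ∧ X ω = x ∧ Uv ω = u) :=
  stmt_3_general p hp X Uv X' πpre hpre1 P πpost hker
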